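/- Let V and W be varieties of the same similarity type without nullary operation symbols, and let W be idempotent. If there exist binary terms f(x,y) and g(x,y) such that V satisfies the identities f(x,y) = x and g(x,y) = y, and W satisfies the identity f(x,y) = g(x,y), then the Mal'tsev product V ∘ W is a variety. -/

import Mathlib

structure Signature where
  symbols : Type
  arity : symbols → ℕ

structure Alg (S : Signature) where
  carrier : Type
  op : ∀ ω : S.symbols, (Fin (S.arity ω) → carrier) → carrier
  nonempty : Nonempty carrier

inductive Term (S : Signature) (X : Type) : Type
  | var : X → Term S X
  | app : ∀ ω : S.symbols, (Fin (S.arity ω) → Term S X) → Term S X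

def Term.eval {S : Signature} {X : Type} (A : Alg S) (env : X → A.carrier) :
    Term S X → A.carrier
  | .var x => env x
  | .app ω ts => A.op ω fun i => (ts i).eval A env

/-- The algebra `A` satisfies the identity `u = v`. -/
def Alg.sat {S : Signature} (A : Alg S) {X : Type} (u v : Term S X) : Prop :=
  ∀ env : X → A.carrier, u.eval A env = v.eval A env

/-- An identity: a pair of terms in the countably many variables `x₀, x₁, …`. -/
abbrev Ident (S : Signature) := Term S ℕ × Term S ℕ

/-- `A` lies in the variety axiomatized by the set of identities `E`. -/
def Alg.Models {S : Signature} (A : Alg S) (E : Set (Ident S)) : Prop :=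
  ∀ e ∈ E, A.sat e.1 e.2

/-- The identity `u = v` holds in the variety axiomatized by `E`. -/
def Conseq {S : Signature} (E : Set (Ident S)) {X : Type} (u v : Term S X) : Prop :=
  ∀ A : Alg S, A.Models E → A.sat u v

/-- `a` is an idempotent element of `A`. -/
def Alg.IsIdem {S : Signature} (A : Alg S) (a : A.carrier) : Prop :=
  ∀ ω : S.symbols, A.op ω (fun _ => a) = a

/-- `B` is (the universe of) a subalgebra of `A`. -/
def Alg.IsSubuniverse {S : Signature} (A : Alg S) (B : Set A.carrier) : Prop :=
  ∀ ω (a : Fin (S.arity ω) → A.carrier), (∀ i, a i ∈ B) → A.op ω a ∈ B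

/-- The subalgebra of `A` on a nonempty subuniverse `B`. -/
def Alg.subAlg {S : Signature} (A : Alg S) (B : Set A.carrier)
    (h : A.IsSubuniverse B) (hne : B.Nonempty) : Alg S where
  carrier := B
  op ω a := ⟨A.op ω fun i => (a i : A.carrier), h ω _ fun i => (a i).2⟩
  nonempty := hne.to_subtype

/-- A congruence of `A`: an equivalence relation compatible with all operations. -/
structure Congruence {S : Signature} (A : Alg S) where
  rel : A.carrier → A.carrier → Prop
  iseqv : Equivalence rel
  compat : ∀ ω (a b : Fin (S.arity ω) → A.carrier),
    (∀ i, rel (a i) (b i)) → rel (A.op ω a) (A.op ω b)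

def Congruence.setoid {S : Signature} {A : Alg S} (θ : Congruence A) :
    Setoid A.carrier := ⟨θ.rel, θ.iseqv⟩

/-- The quotient algebra `A/θ`. -/
noncomputable def Alg.quot {S : Signature} (A : Alg S) (θ : Congruence A) : Alg S where
  carrier := Quotient θ.setoid
  op ω q := Quotient.mk θ.setoid (A.op ω fun i => (q i).out)
  nonempty := A.nonempty.map (Quotient.mk θ.setoid)

/-- Membership in the Mal'tsev product of the varieties axiomatized by `V` and `W`:
`A` has a congruence `θ` with `A/θ` in (the variety of) `W` such that every
`θ`-class which is a subalgebra of `A` is an algebra in (the variety of) `V`. -/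
def InMaltsev {S : Signature} (V W : Set (Ident S)) (A : Alg S) : Prop :=
  ∃ θ : Congruence A, (A.quot θ).Models W ∧
    ∀ a : A.carrier, ∀ h : A.IsSubuniverse {b | θ.rel a b},
      (A.subAlg {b | θ.rel a b} h ⟨a, θ.iseqv.refl a⟩).Models V

/-- A class of algebras is a variety iff it is axiomatized by some set of identities. -/
def IsVarietyClass {S : Signature} (K : Alg S → Prop) : Prop :=
  ∃ E : Set (Ident S), ∀ A : Alg S, K A ↔ A.Models E


/-!
Axiomatize `V ∘ W` by its own equational theory; it then suffices that every algebra `A`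
satisfying that theory lies in `V ∘ W`. The theory contains all identities `p(σ) = q(σ)` with
`V ⊨ p = q` and the terms `σ x` pairwise `W`-equivalent: in `A ∈ V ∘ W` the values `σ x`
lie in one class of `θ`, which is a subalgebra because `A/θ` is idempotent, and so is in `V`.

Conversely, if `A` satisfies these identities, put `b α c :⇔ f(b,c) = b ∧ g(b,c) = c`. For
`W`-equivalent `t, t'` the identities `f(t,t') = t`, `g(t,t') = t'` are of the above form, so
`α` relates `t(ā)` and `t'(ā)`. Suitable choices of `t, t'` make `α` a congruence with
`A/α ∈ W`. Finally, on an `α`-class every `V`-identity holds, because each element `cₙ` of a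
finite tuple is the value of a selector term, and the selector terms are `W`-equivalent.
-/

section MaltsevProduct

variable {S : Signature}

namespace Term

def subst {X Y : Type} : Term S X → (X → Term S Y) → Term S Y
  | .var x, σ => σ x
  | .app ω ts, σ => .app ω fun i => (ts i).subst σ

theorem eval_subst {X Y : Type} (A : Alg S) (t : Term S X) (σ : X → Term S Y)
    (e : Y → A.carrier) : (t.subst σ).eval A e = t.eval A fun x => (σ x).eval A e := by
  induction t with
  | var x => rfl
  | app ω ts ih => exact congrArg (A.op ω) (funext ih)

theorem eval_subst_pair {X : Type} (A : Alg S) (h : Term S (Fin 2)) (u v : Term S X)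
    (e : X → A.carrier) : (h.subst ![u, v]).eval A e = h.eval A ![u.eval A e, v.eval A e] := by
  rw [eval_subst]
  congr 1
  funext i
  fin_cases i <;> rfl

def varBound : Term S ℕ → ℕ
  | .var n => n + 1
  | .app _ ts => Finset.univ.sup fun i => (ts i).varBound

theorem eval_congr_of_lt_varBound (A : Alg S) (t : Term S ℕ) {e e' : ℕ → A.carrier}
    (h : ∀ n < t.varBound, e n = e' n) : t.eval A e = t.eval A e' := by
  induction t with
  | var n => exact h n n.lt_succ_self
  | app ω ts ih =>
    exact congrArg (A.op ω) <| funext fun i => ih i fun n hn =>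
      h n (hn.trans_le (Finset.le_sup (f := fun i => (ts i).varBound) (Finset.mem_univ i)))

theorem eval_quot (A : Alg S) (θ : Congruence A) {X : Type} (t : Term S X)
    (e : X → A.carrier) :
    t.eval (A.quot θ) (fun x => Quotient.mk θ.setoid (e x))
      = Quotient.mk θ.setoid (t.eval A e) := by
  induction t with
  | var x => rfl
  | app ω ts ih =>
    exact Quotient.sound <| θ.compat ω _ _ fun i =>
      Quotient.exact (s := θ.setoid) ((Quotient.out_eq _).trans (ih i))

theorem eval_subAlg (A : Alg S) (B : Set A.carrier) (h : A.IsSubuniverse B)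
    (hne : B.Nonempty) {X : Type} (t : Term S X) (e : X → (A.subAlg B h hne).carrier) :
    (t.eval (A.subAlg B h hne) e).val = t.eval A fun x => (e x).val := by
  induction t with
  | var x => rfl
  | app ω ts ih => exact congrArg (A.op ω) (funext ih)

end Term

theorem Conseq.refl (E : Set (Ident S)) {X : Type} (t : Term S X) : Conseq E t t :=
  fun _ _ _ => rfl

theorem Conseq.symm {E : Set (Ident S)} {X : Type} {t s : Term S X} (h : Conseq E t s) :
    Conseq E s t :=
  fun A hA e => (h A hA e).symm

namespace Alg

def theory (K : Alg S → Prop) : Set (Ident S) :=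
  {e | ∀ A, K A → A.sat e.1 e.2}

theorem models_theory {K : Alg S → Prop} {A : Alg S} (hA : K A) : A.Models (theory K) :=
  fun _ he => he A hA

theorem isVarietyClass_of_models_theory {K : Alg S → Prop}
    (h : ∀ A, A.Models (theory K) → K A) : IsVarietyClass K :=
  ⟨theory K, fun _ => ⟨models_theory, h _⟩⟩

/-- Identities are stated over `ℕ`; an injection `Y ↪ ℕ` transports identities over a
countable `Y` (the nonemptiness of `A` supplies values for the variables outside its range). -/
theorem sat_of_models_theory {K : Alg S → Prop} {A : Alg S} (hA : A.Models (theory K))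
    {Y : Type} [Countable Y] {u v : Term S Y} (huv : ∀ B, K B → B.sat u v) : A.sat u v := by
  obtain ⟨ι, hι⟩ := Countable.exists_injective_nat Y
  let rename (t : Term S Y) : Term S ℕ := t.subst fun y => .var (ι y)
  have eval_rename (B : Alg S) (t : Term S Y) (e : ℕ → B.carrier) :
      (rename t).eval B e = t.eval B (e ∘ ι) :=
    t.eval_subst B _ e
  intro e
  have h := hA (rename u, rename v) (fun B hB e' => by
      simp only [eval_rename]; exact huv B hB _)
    (Function.extend ι e fun _ => Classical.choice A.nonempty)
  simpa only [eval_rename, Function.extend_comp hι] using h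

def SatMaltsevIdentities (V W : Set (Ident S)) (A : Alg S) : Prop :=
  ∀ {X Y : Type} [Countable Y] (p q : Term S X) (σ : X → Term S Y),
    Conseq V p q → (∀ x y, Conseq W (σ x) (σ y)) → A.sat (p.subst σ) (q.subst σ)

end Alg

theorem Congruence.isSubuniverse_class {A : Alg S} (θ : Congruence A)
    (hidem : ∀ q, (A.quot θ).IsIdem q) (a : A.carrier) : A.IsSubuniverse {b | θ.rel a b} := by
  intro ω b hb
  have hout : θ.rel a (Quotient.mk θ.setoid a).out :=
    Quotient.exact (s := θ.setoid) (Quotient.out_eq _).symm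
  have hop : θ.rel (A.op ω fun _ => (Quotient.mk θ.setoid a).out) a :=
    Quotient.exact (hidem _ ω)
  exact θ.iseqv.trans (θ.iseqv.symm hop)
    (θ.compat ω _ _ fun i => θ.iseqv.trans (θ.iseqv.symm hout) (hb i))

theorem InMaltsev.satMaltsevIdentities {V W : Set (Ident S)}
    (hWidem : ∀ A : Alg S, A.Models W → ∀ a : A.carrier, A.IsIdem a) {A : Alg S}
    (hA : InMaltsev V W A) : A.SatMaltsevIdentities V W := by
  obtain ⟨θ, hW, hV⟩ := hA
  intro X Y _ p q σ hpq hσ e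
  set d := fun x => (σ x).eval A e
  have hd (x y : X) : θ.rel (d x) (d y) := by
    have h := hσ x y _ hW fun y => Quotient.mk θ.setoid (e y)
    rw [Term.eval_quot, Term.eval_quot] at h
    exact Quotient.exact h
  obtain ⟨a, ha⟩ : ∃ a, ∀ x, θ.rel a (d x) := by
    rcases isEmpty_or_nonempty X with hX | ⟨⟨x₀⟩⟩
    · exact ⟨Classical.choice A.nonempty, isEmptyElim⟩
    · exact ⟨d x₀, hd x₀⟩
  have h := congrArg Subtype.val <|
    hpq _ (hV a (θ.isSubuniverse_class (hWidem _ hW) a)) fun x => ⟨d x, ha x⟩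
  erw [Term.eval_subAlg, Term.eval_subAlg] at h
  rwa [Term.eval_subst, Term.eval_subst]

def Alg.fgRel (A : Alg S) (f g : Term S (Fin 2)) (b c : A.carrier) : Prop :=
  f.eval A ![b, c] = b ∧ g.eval A ![b, c] = c

/-- `selector f g n k = hₖ(⋯h₂(h₁(x₀, x₁), x₂)⋯, xₖ)` with `hₙ = g` and `hᵢ = f` for `i ≠ n`.
On pairwise `fgRel`-related values it returns `xₙ` (for `n ≤ k`), yet modulo `f ≈ g` it does
not depend on `n`. -/
def Term.selector (f g : Term S (Fin 2)) (n : ℕ) : ℕ → Term S ℕ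
  | 0 => .var 0
  | k + 1 => (if k + 1 = n then g else f).subst ![selector f g n k, .var (k + 1)]

theorem Term.conseq_selector {W : Set (Ident S)} {f g : Term S (Fin 2)} (hfg : Conseq W f g)
    (k n m : ℕ) : Conseq W (selector f g n k) (selector f g m k) := by
  intro C hC e
  have eval_ite (P : Prop) [Decidable P] (env : Fin 2 → C.carrier) :
      (if P then g else f).eval C env = f.eval C env := by
    split_ifs
    exacts [(hfg C hC env).symm, rfl]
  induction k with
  | zero => rfl
  | succ k ih => rw [selector, selector, eval_subst_pair, eval_subst_pair, ih, eval_ite, eval_ite]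

theorem Term.eval_selector {f g : Term S (Fin 2)} {A : Alg S} {c : ℕ → A.carrier}
    (hc : ∀ i j, A.fgRel f g (c i) (c j)) (n k : ℕ) :
    (selector f g n k).eval A c = if k < n then c 0 else c n := by
  induction k with
  | zero => cases n <;> rfl
  | succ k ih =>
    rw [selector, eval_subst_pair, ih]
    change (if k + 1 = n then g else f).eval A ![_, c (k + 1)] = _
    split_ifs <;> first
      | omega
      | exact (hc _ _).1
      | (subst n; exact (hc _ _).2)

section Completeness

variable {V W : Set (Ident S)} {f g : Term S (Fin 2)} {A : Alg S}

theorem Alg.fgRel_of_conseq (hA : A.SatMaltsevIdentities V W) (hf : Conseq V f (.var 0))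
    (hg : Conseq V g (.var 1)) {Y : Type} [Countable Y] {t t' : Term S Y}
    (htt' : Conseq W t t') (e : Y → A.carrier) : A.fgRel f g (t.eval A e) (t'.eval A e) := by
  have hσ (i j : Fin 2) : Conseq W (![t, t'] i) (![t, t'] j) := by
    fin_cases i <;> fin_cases j
    exacts [Conseq.refl W t, htt', htt'.symm, Conseq.refl W t']
  constructor
  · have h := hA f (.var 0) ![t, t'] hf hσ e
    rw [Term.eval_subst_pair] at h
    exact h
  · have h := hA g (.var 1) ![t, t'] hg hσ e
    rw [Term.eval_subst_pair] at h
    exact h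

theorem Alg.fgRel_refl (hA : A.SatMaltsevIdentities V W) (hf : Conseq V f (.var 0))
    (hg : Conseq V g (.var 1)) (b : A.carrier) : A.fgRel f g b b :=
  fgRel_of_conseq hA hf hg (Conseq.refl W (.var ())) fun _ => b

theorem Alg.fgRel_symm (hA : A.SatMaltsevIdentities V W) (hf : Conseq V f (.var 0))
    (hg : Conseq V g (.var 1)) (hfg : Conseq W f g) {b c : A.carrier}
    (h : A.fgRel f g b c) : A.fgRel f g c b := by
  have h' := fgRel_of_conseq hA hf hg hfg.symm ![b, c]
  rwa [h.1, h.2] at h'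

theorem Alg.fgRel_trans (hA : A.SatMaltsevIdentities V W) (hf : Conseq V f (.var 0))
    (hg : Conseq V g (.var 1)) (hfg : Conseq W f g) {b c d : A.carrier}
    (hbc : A.fgRel f g b c) (hcd : A.fgRel f g c d) : A.fgRel f g b d := by
  let x : Fin 3 → Term S (Fin 3) := .var
  have htt' : Conseq W (f.subst ![f.subst ![x 0, x 1], f.subst ![x 1, x 2]])
      (g.subst ![g.subst ![x 0, x 1], g.subst ![x 1, x 2]]) := by
    intro C hC e
    simp only [Term.eval_subst_pair]
    rw [hfg C hC, hfg C hC, hfg C hC]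
  have h := fgRel_of_conseq hA hf hg htt' ![b, c, d]
  simp only [Term.eval_subst_pair] at h
  change A.fgRel f g (f.eval A ![f.eval A ![b, c], f.eval A ![c, d]])
    (g.eval A ![g.eval A ![b, c], g.eval A ![c, d]]) at h
  rwa [hbc.1, hcd.1, hbc.1, hbc.2, hcd.2, hcd.2] at h

theorem Alg.fgRel_compat (hA : A.SatMaltsevIdentities V W) (hf : Conseq V f (.var 0))
    (hg : Conseq V g (.var 1)) (hfg : Conseq W f g) (ω : S.symbols)
    (a b : Fin (S.arity ω) → A.carrier) (hab : ∀ i, A.fgRel f g (a i) (b i)) :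
    A.fgRel f g (A.op ω a) (A.op ω b) := by
  let t (h : Term S (Fin 2)) : Term S (Fin (S.arity ω) ⊕ Fin (S.arity ω)) :=
    .app ω fun i => h.subst ![.var (.inl i), .var (.inr i)]
  have htt' : Conseq W (t f) (t g) := fun C hC e =>
    congrArg (C.op ω) <| funext fun i => by
      rw [Term.eval_subst_pair, Term.eval_subst_pair]
      exact hfg C hC _
  have ht (h : Term S (Fin 2)) :
      (t h).eval A (Sum.elim a b) = A.op ω fun i => h.eval A ![a i, b i] :=
    congrArg (A.op ω) <| funext fun i => Term.eval_subst_pair A h _ _ _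
  have h := fgRel_of_conseq hA hf hg htt' (Sum.elim a b)
  rwa [ht, ht, funext fun i => (hab i).1, funext fun i => (hab i).2] at h

def Alg.fgCongruence (hA : A.SatMaltsevIdentities V W) (hf : Conseq V f (.var 0))
    (hg : Conseq V g (.var 1)) (hfg : Conseq W f g) : Congruence A where
  rel := A.fgRel f g
  iseqv := ⟨fgRel_refl hA hf hg, fgRel_symm hA hf hg hfg, fgRel_trans hA hf hg hfg⟩
  compat := fgRel_compat hA hf hg hfg

theorem Alg.quot_fgCongruence_models (hA : A.SatMaltsevIdentities V W)
    (hf : Conseq V f (.var 0)) (hg : Conseq V g (.var 1)) (hfg : Conseq W f g) :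
    (A.quot (fgCongruence hA hf hg hfg)).Models W := by
  rintro ⟨u, v⟩ huv env
  have henv : env = fun n => Quotient.mk _ (env n).out :=
    funext fun n => (Quotient.out_eq _).symm
  rw [henv, Term.eval_quot, Term.eval_quot]
  exact Quotient.sound (fgRel_of_conseq hA hf hg (fun C hC => hC _ huv) _)

theorem Alg.fgCongruence_class_models (hA : A.SatMaltsevIdentities V W)
    (hf : Conseq V f (.var 0)) (hg : Conseq V g (.var 1)) (hfg : Conseq W f g)
    (a : A.carrier) (hsub : A.IsSubuniverse {b | (fgCongruence hA hf hg hfg).rel a b}) :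
    (A.subAlg {b | (fgCongruence hA hf hg hfg).rel a b} hsub
      ⟨a, (fgCongruence hA hf hg hfg).iseqv.refl a⟩).Models V := by
  rintro ⟨p, q⟩ hpq c
  let N := max p.varBound q.varBound
  have hc (i j : ℕ) : A.fgRel f g (c i).val (c j).val :=
    fgRel_trans hA hf hg hfg (fgRel_symm hA hf hg hfg (c i).2) (c j).2
  have hsel (n : ℕ) (hn : n < N) :
      (Term.selector f g n N).eval A (fun m => (c m).val) = (c n).val := by
    rw [Term.eval_selector hc, if_neg (Nat.not_lt.mpr hn.le)]
  have key := hA p q (fun n => Term.selector f g n N) (fun C hC => hC _ hpq)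
    (fun n m => Term.conseq_selector hfg N n m) fun m => (c m).val
  rw [Term.eval_subst, Term.eval_subst] at key
  apply Subtype.ext
  erw [Term.eval_subAlg, Term.eval_subAlg]
  calc p.eval A (fun n => (c n).val)
      = p.eval A fun n => (Term.selector f g n N).eval A fun m => (c m).val :=
        Term.eval_congr_of_lt_varBound A p fun n hn => (hsel n (by omega)).symm
    _ = q.eval A fun n => (Term.selector f g n N).eval A fun m => (c m).val := key
    _ = q.eval A (fun n => (c n).val) :=
        Term.eval_congr_of_lt_varBound A q fun n hn => hsel n (by omega)

end Completeness

end MaltsevProduct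

theorem stmt_11_general (S : Signature)
    (V W : Set (Ident S))
    (hWidem : ∀ A : Alg S, A.Models W → ∀ a : A.carrier, A.IsIdem a)
    (f g : Term S (Fin 2))
    (hf : Conseq V f (Term.var 0))
    (hg : Conseq V g (Term.var 1))
    (hfg : Conseq W f g) :
    IsVarietyClass (InMaltsev V W) := by
  refine Alg.isVarietyClass_of_models_theory fun A hA => ?_
  have hsat : A.SatMaltsevIdentities V W := fun p q σ hpq hσ =>
    Alg.sat_of_models_theory hA fun _ hB => hB.satMaltsevIdentities hWidem p q σ hpq hσ
  exact ⟨Alg.fgCongruence hsat hf hg hfg, Alg.quot_fgCongruence_models hsat hf hg hfg,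
    Alg.fgCongruence_class_models hsat hf hg hfg⟩

/-- Let `V` and `W` be varieties of the same type without
nullary operation symbols, with `W` idempotent. If there are binary terms
`f(x,y)` and `g(x,y)` such that `V ⊨ f(x,y) = x`, `V ⊨ g(x,y) = y` and
`W ⊨ f(x,y) = g(x,y)`, then the Mal'tsev product `V ∘ W` is a variety. -/
theorem stmt_11 (S : Signature) (h0 : ∀ ω : S.symbols, 0 < S.arity ω)
    (V W : Set (Ident S))
    (hWidem : ∀ A : Alg S, A.Models W → ∀ a : A.carrier, A.IsIdem a)
    (f g : Term S (Fin 2))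
    (hf : Conseq V f (Term.var 0))
    (hg : Conseq V g (Term.var 1))
    (hfg : Conseq W f g) :
    IsVarietyClass (InMaltsev V W) :=
  stmt_11_general S V W hWidem f g hf hg hfg
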